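/- Suppose F satisfies (F1)–(F3), each estimator η_N satisfies (A1)–(A2), λ ∈ (0, 1/C₅) with C₅ := C₃ C₁ and C₃ := 1 + β/ν, and the perturbed contraction property holds: there are constants 0 < q < 1 and C₇ > 0 with η_{N+1}(u*_{N+1})² ≤ q η_N(u*_N)² + C₇ ‖u*_{N+1} − u*_N‖_X² for all N ≥ 0. Assume that for each N ≥ 0 there are elements w_N, u_N ∈ X_N such that a(w_N; u_N, v) = a(w_N; w_N, v) − ⟨F(w_N), v⟩ for all v ∈ X_N and ‖u_N − w_N‖_X ≤ λ η_N(u_N). Set γ := ν/(2C₇) and q_Δ := (L C₂² + 2γq)/(L C₂² + 2γ). Then there exists a constant C₈ > 0 such that η_{N+K}(u_{N+K})² ≤ C₈ q_Δ^K η_N(u_N)² for all N, K ≥ 0, i.e. the estimators decay at a linear rate. -/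

import Mathlib

set_option autoImplicit false

/-!
Integrating `F` along a segment squeezes the potential between `ν/2` and `L/2` times the squared
distance to a Galerkin solution. Hence the energy drop `H(u*_N) - H(u*_{N+1})` absorbs the
perturbation term `C₇‖u*_{N+1} - u*_N‖²`, while (A2) bounds the energy `H(u*_N) - H(u*)` by
`(L C₂²/2) η_N(u*_N)²`; together these make the quasi-error
`η_N(u*_N)² + (2C₇/ν)(H(u*_N) - H(u*))` contract by the factor `q_Δ`.
The linearized step and the stopping criterion put `u_N` within `C₃ λ η_N(u_N)` of `u*_N`, so by
(A1) the estimators at `u_N` and at `u*_N` agree up to the factors `1 ± C₅λ`, which transfers the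
linear decay to the computed iterates.
-/

open Set

theorem half_le_sub_of_linear_le_deriv {g g' : ℝ → ℝ} {c : ℝ}
    (hg : ∀ t ∈ Icc (0 : ℝ) 1, HasDerivAt g (g' t) t)
    (hlow : ∀ t ∈ Ioo (0 : ℝ) 1, c * t ≤ g' t) :
    c / 2 ≤ g 1 - g 0 := by
  have hφ : ∀ t ∈ Icc (0 : ℝ) 1, HasDerivAt (fun t => g t - c * t ^ 2 / 2) (g' t - c * t) t :=
    fun t ht => (hg t ht).sub ((((hasDerivAt_pow 2 t).const_mul c).div_const 2).congr_deriv (by ring))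
  have hmono : MonotoneOn (fun t => g t - c * t ^ 2 / 2) (Icc 0 1) := by
    refine monotoneOn_of_deriv_nonneg (convex_Icc 0 1)
      (fun t ht => (hφ t ht).continuousAt.continuousWithinAt) (fun t ht => ?_) (fun t ht => ?_)
    · exact (hφ t (interior_subset ht)).differentiableAt.differentiableWithinAt
    · rw [(hφ t (interior_subset ht)).deriv, sub_nonneg]
      exact hlow t (by rwa [interior_Icc] at ht)
  have := hmono (left_mem_Icc.2 zero_le_one) (right_mem_Icc.2 zero_le_one) zero_le_one
  simp only at this
  linarith

theorem sub_le_half_of_deriv_le_linear {g g' : ℝ → ℝ} {c : ℝ}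
    (hg : ∀ t ∈ Icc (0 : ℝ) 1, HasDerivAt g (g' t) t)
    (hup : ∀ t ∈ Ioo (0 : ℝ) 1, g' t ≤ c * t) :
    g 1 - g 0 ≤ c / 2 := by
  have := half_le_sub_of_linear_le_deriv (g := fun t => -g t) (g' := fun t => -g' t) (c := -c)
    (fun t ht => (hg t ht).neg) (fun t ht => by linarith [hup t ht])
  linarith

section Potential

variable {X : Type*} [NormedAddCommGroup X] [NormedSpace ℝ X] {F : X → X →L[ℝ] ℝ} {H : X → ℝ}

theorem mul_sq_norm_le_potential_sub {ν : ℝ}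
    (hF2 : ∀ u v : X, ν * ‖u - v‖ ^ 2 ≤ F u (u - v) - F v (u - v))
    (hF3 : ∀ v w : X, ∀ t : ℝ, HasDerivAt (fun s : ℝ => H (v + s • w)) (F (v + t • w) w) t)
    {b x : X} (hb : F b (x - b) = 0) :
    ν / 2 * ‖x - b‖ ^ 2 ≤ H x - H b := by
  set d := x - b
  have key := half_le_sub_of_linear_le_deriv (c := ν * ‖d‖ ^ 2)
    (fun t _ => hF3 b d t) fun t ht => by
      have h := hF2 (b + t • d) b
      rw [add_sub_cancel_left, map_smul, map_smul, hb, norm_smul, Real.norm_eq_abs,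
        abs_of_pos ht.1, smul_eq_mul, smul_eq_mul] at h
      nlinarith [ht.1]
  simpa [d, mul_div_right_comm] using key

theorem potential_sub_le_mul_sq_norm {L : ℝ}
    (hF1 : ∀ u v w : X, |F u w - F v w| ≤ L * ‖u - v‖ * ‖w‖)
    (hF3 : ∀ v w : X, ∀ t : ℝ, HasDerivAt (fun s : ℝ => H (v + s • w)) (F (v + t • w) w) t)
    {b x : X} (hb : F b (x - b) = 0) :
    H x - H b ≤ L / 2 * ‖x - b‖ ^ 2 := by
  set d := x - b
  have key := sub_le_half_of_deriv_le_linear (c := L * ‖d‖ ^ 2)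
    (fun t _ => hF3 b d t) fun t ht => by
      have h := hF1 (b + t • d) b d
      rw [add_sub_cancel_left, hb, sub_zero, norm_smul, Real.norm_eq_abs,
        abs_of_pos ht.1] at h
      nlinarith [le_abs_self (F (b + t • d) d)]
  simpa [d, mul_div_right_comm] using key

end Potential

theorem norm_sub_le_of_linearized_step {X : Type*} [NormedAddCommGroup X] [NormedSpace ℝ X]
    {F : X → X →L[ℝ] ℝ} {ν β : ℝ} (hν : 0 < ν) (hβ : 0 ≤ β)
    (hF2 : ∀ u v : X, ν * ‖u - v‖ ^ 2 ≤ F u (u - v) - F v (u - v))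
    {A : X →ₗ[ℝ] X →ₗ[ℝ] ℝ} (hA : ∀ v z : X, A v z ≤ β * ‖v‖ * ‖z‖)
    {V : Submodule ℝ X} {us w u : X} (hus : us ∈ V) (hw : w ∈ V)
    (hFus : ∀ v ∈ V, F us v = 0) (hstep : ∀ v ∈ V, A u v = A w v - F w v) :
    ‖us - u‖ ≤ (1 + β / ν) * ‖u - w‖ := by
  set e := us - w
  have he : e ∈ V := V.sub_mem hus hw
  have hsq : ν * ‖e‖ ^ 2 ≤ β * ‖u - w‖ * ‖e‖ := by
    have hsub : A (u - w) e = A u e - A w e := by simp only [map_sub, LinearMap.sub_apply]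
    linarith [hF2 us w, hFus e he, hstep e he, hA (u - w) e]
  have hnorm : ν * ‖e‖ ≤ β * ‖u - w‖ := by
    rcases (norm_nonneg e).eq_or_lt with h0 | h0
    · rw [← h0, mul_zero]
      positivity
    · exact le_of_mul_le_mul_right (by linarith) h0
  calc ‖us - u‖ = ‖e + (w - u)‖ := by rw [sub_add_sub_cancel]
    _ ≤ ‖e‖ + ‖u - w‖ := (norm_add_le _ _).trans_eq (by rw [norm_sub_rev w u])
    _ ≤ β / ν * ‖u - w‖ + ‖u - w‖ := by
        gcongr
        rw [div_mul_eq_mul_div, le_div_iff₀ hν]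
        linarith
    _ = (1 + β / ν) * ‖u - w‖ := by ring

section PerturbedContraction

variable {e E d : ℕ → ℝ} {q C κ Λ : ℝ}

theorem perturbed_contraction_step (hC : 0 ≤ C) (hκ : 0 < κ) (hΛ : 0 ≤ Λ) (hq1 : q ≤ 1)
    (hE : ∀ N, E N ≤ Λ * e N ^ 2) (hdec : ∀ N, κ * d N ^ 2 ≤ E N - E (N + 1))
    (hpert : ∀ N, e (N + 1) ^ 2 ≤ q * e N ^ 2 + C * d N ^ 2) (N : ℕ) :
    e (N + 1) ^ 2 + C / κ * E (N + 1) ≤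
      (q + C / κ * Λ) / (1 + C / κ * Λ) * (e N ^ 2 + C / κ * E N) := by
  have hdec' : C * d N ^ 2 ≤ C / κ * (E N - E (N + 1)) := by
    rw [div_mul_eq_mul_div, le_div_iff₀ hκ]
    nlinarith [hdec N]
  have hμ : 0 ≤ C / κ := div_nonneg hC hκ.le
  generalize C / κ = μ at hdec' hμ ⊢
  -- `(q + μΛ)/(1 + μΛ)` is the least factor for which `E N ≤ Λ e N²` pays for the weight `μ`.
  have hden : 0 < 1 + μ * Λ := by positivity
  rw [div_mul_eq_mul_div, le_div_iff₀ hden]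
  have : μ * (1 - q) * E N ≤ μ * (1 - q) * (Λ * e N ^ 2) :=
    mul_le_mul_of_nonneg_left (hE N) (mul_nonneg hμ (by linarith))
  nlinarith [hpert N, hdec']

theorem sq_le_geom_of_perturbed_contraction (hC : 0 ≤ C) (hκ : 0 < κ) (hΛ : 0 ≤ Λ)
    (hq0 : 0 ≤ q) (hq1 : q ≤ 1) (hE0 : ∀ N, 0 ≤ E N) (hE : ∀ N, E N ≤ Λ * e N ^ 2)
    (hdec : ∀ N, κ * d N ^ 2 ≤ E N - E (N + 1))
    (hpert : ∀ N, e (N + 1) ^ 2 ≤ q * e N ^ 2 + C * d N ^ 2) (N K : ℕ) :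
    e (N + K) ^ 2 ≤
      (1 + C / κ * Λ) * ((q + C / κ * Λ) / (1 + C / κ * Λ)) ^ K * e N ^ 2 := by
  have hμ : 0 ≤ C / κ := div_nonneg hC hκ.le
  have hgeom := le_geom (u := fun k => e (N + k) ^ 2 + C / κ * E (N + k))
    (by positivity) K fun k _ => perturbed_contraction_step hC hκ hΛ hq1 hE hdec hpert (N + k)
  simp only [add_zero] at hgeom
  calc e (N + K) ^ 2 ≤ e (N + K) ^ 2 + C / κ * E (N + K) :=
        le_add_of_nonneg_right (mul_nonneg hμ (hE0 _))
    _ ≤ _ := hgeom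
    _ ≤ ((q + C / κ * Λ) / (1 + C / κ * Λ)) ^ K * ((1 + C / κ * Λ) * e N ^ 2) := by
        gcongr
        nlinarith [hE N]
    _ = _ := by ring

end PerturbedContraction

theorem sq_le_geom_of_abs_sub_le {a b : ℕ → ℝ} {δ M ρ : ℝ} (hδ : δ < 1) (hM : 0 ≤ M)
    (hρ : 0 ≤ ρ) (ha : ∀ N, 0 ≤ a N) (hab : ∀ N, |a N - b N| ≤ δ * a N)
    (hb : ∀ N K, b (N + K) ^ 2 ≤ M * ρ ^ K * b N ^ 2) (N K : ℕ) :
    a (N + K) ^ 2 ≤ (1 + δ) ^ 2 * M / (1 - δ) ^ 2 * ρ ^ K * a N ^ 2 := by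
  have hlo : ∀ N, (1 - δ) * a N ≤ b N := fun N => by linarith [(abs_le.1 (hab N)).2]
  have hhi : ∀ N, b N ≤ (1 + δ) * a N := fun N => by linarith [(abs_le.1 (hab N)).1]
  have hlo_nonneg : ∀ N, 0 ≤ (1 - δ) * a N := fun N => mul_nonneg (by linarith) (ha N)
  have hsq : (1 - δ) ^ 2 * a (N + K) ^ 2 ≤ (1 + δ) ^ 2 * M * ρ ^ K * a N ^ 2 :=
    calc (1 - δ) ^ 2 * a (N + K) ^ 2 = ((1 - δ) * a (N + K)) ^ 2 := by ring
      _ ≤ b (N + K) ^ 2 := pow_le_pow_left₀ (hlo_nonneg _) (hlo _) 2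
      _ ≤ M * ρ ^ K * b N ^ 2 := hb N K
      _ ≤ M * ρ ^ K * ((1 + δ) * a N) ^ 2 := by
          gcongr
          · exact (hlo_nonneg N).trans (hlo N)
          · exact hhi N
      _ = (1 + δ) ^ 2 * M * ρ ^ K * a N ^ 2 := by ring
  rw [show (1 + δ) ^ 2 * M / (1 - δ) ^ 2 * ρ ^ K * a N ^ 2 =
      (1 + δ) ^ 2 * M * ρ ^ K * a N ^ 2 / (1 - δ) ^ 2 by ring, le_div_iff₀ (by nlinarith)]
  linarith

theorem stmt_18_general
    {X : Type*} [NormedAddCommGroup X] [InnerProductSpace ℝ X]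
    (F : X → X →L[ℝ] ℝ) (L ν : ℝ) (hL : 0 < L) (hν : 0 < ν)
    (hF1 : ∀ u v w : X, |F u w - F v w| ≤ L * ‖u - v‖ * ‖w‖)
    (hF2 : ∀ u v : X, ν * ‖u - v‖ ^ 2 ≤ F u (u - v) - F v (u - v))
    (ustar : X) (hustar : ∀ v : X, F ustar v = 0)
    (a : X → X →ₗ[ℝ] X →ₗ[ℝ] ℝ) (β : ℝ) (hβ : 0 < β)
    (hbdd : ∀ u v w : X, a u v w ≤ β * ‖v‖ * ‖w‖)
    (H : X → ℝ)
    (hF3 : ∀ v w : X, ∀ t : ℝ, HasDerivAt (fun s : ℝ => H (v + s • w)) (F (v + t • w) w) t)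
    (XN : ℕ → Submodule ℝ X)
    (hnested : ∀ N : ℕ, XN N ≤ XN (N + 1))
    (ustarN : ℕ → X) (hustarN_mem : ∀ N : ℕ, ustarN N ∈ XN N)
    (hustarN : ∀ N : ℕ, ∀ v ∈ XN N, F (ustarN N) v = 0)
    (η : ℕ → X → ℝ) (C₁ C₂ : ℝ) (hC₁ : 1 ≤ C₁)
    (hηnonneg : ∀ N : ℕ, ∀ v ∈ XN N, 0 ≤ η N v)
    (hA1 : ∀ N : ℕ, ∀ v ∈ XN N, ∀ w ∈ XN N, |η N v - η N w| ≤ C₁ * ‖v - w‖)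
    (hA2 : ∀ N : ℕ, ‖ustar - ustarN N‖ ≤ C₂ * η N (ustarN N))
    (C₃ C₅ : ℝ) (hC₃ : C₃ = 1 + β / ν) (hC₅ : C₅ = C₃ * C₁)
    (lam : ℝ) (hlam : 0 < lam) (hlam' : lam < 1 / C₅)
    (q C₇ : ℝ) (hq0 : 0 < q) (hq1 : q < 1) (hC₇ : 0 < C₇)
    (hperturb : ∀ N : ℕ,
      η (N + 1) (ustarN (N + 1)) ^ 2 ≤
        q * η N (ustarN N) ^ 2 + C₇ * ‖ustarN (N + 1) - ustarN N‖ ^ 2)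
    (w u : ℕ → X) (hwmem : ∀ N : ℕ, w N ∈ XN N) (humem : ∀ N : ℕ, u N ∈ XN N)
    (hstep : ∀ N : ℕ, ∀ v ∈ XN N, a (w N) (u N) v = a (w N) (w N) v - F (w N) v)
    (hstop : ∀ N : ℕ, ‖u N - w N‖ ≤ lam * η N (u N))
    (γ qΔ : ℝ) (hγ : γ = ν / (2 * C₇))
    (hqΔ : qΔ = (L * C₂ ^ 2 + 2 * γ * q) / (L * C₂ ^ 2 + 2 * γ)) :
    ∃ C₈ : ℝ, 0 < C₈ ∧
      ∀ N K : ℕ, η (N + K) (u (N + K)) ^ 2 ≤ C₈ * qΔ ^ K * η N (u N) ^ 2 := by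
  have hC₅pos : 0 < C₅ := by rw [hC₅, hC₃]; nlinarith [div_pos hβ hν]
  have hδ : C₅ * lam < 1 := by rwa [lt_div_iff₀ hC₅pos, mul_comm] at hlam'
  have hequiv : ∀ N, |η N (u N) - η N (ustarN N)| ≤ C₅ * lam * η N (u N) := fun N =>
    calc |η N (u N) - η N (ustarN N)| ≤ C₁ * ‖ustarN N - u N‖ := by
          rw [norm_sub_rev]; exact hA1 N _ (humem N) _ (hustarN_mem N)
      _ ≤ C₁ * (C₃ * (lam * η N (u N))) := by
          rw [hC₃]
          gcongr
          exact (norm_sub_le_of_linearized_step hν hβ.le hF2 (hbdd (w N)) (hustarN_mem N)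
            (hwmem N) (hustarN N) (hstep N)).trans (by gcongr; exact hstop N)
      _ = C₅ * lam * η N (u N) := by rw [hC₅]; ring
  have hE0 : ∀ N, 0 ≤ H (ustarN N) - H ustar := fun N =>
    le_trans (by positivity) (mul_sq_norm_le_potential_sub hF2 hF3 (hustar _))
  have hE : ∀ N, H (ustarN N) - H ustar ≤ L * C₂ ^ 2 / 2 * η N (ustarN N) ^ 2 := fun N =>
    calc H (ustarN N) - H ustar ≤ L / 2 * ‖ustarN N - ustar‖ ^ 2 :=
          potential_sub_le_mul_sq_norm hF1 hF3 (hustar _)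
      _ ≤ L / 2 * (C₂ * η N (ustarN N)) ^ 2 := by
          rw [norm_sub_rev]; gcongr; exact hA2 N
      _ = L * C₂ ^ 2 / 2 * η N (ustarN N) ^ 2 := by ring
  have hdec : ∀ N, ν / 2 * ‖ustarN (N + 1) - ustarN N‖ ^ 2 ≤
      (H (ustarN N) - H ustar) - (H (ustarN (N + 1)) - H ustar) := fun N => by
    rw [sub_sub_sub_cancel_right, norm_sub_rev]
    exact mul_sq_norm_le_potential_sub hF2 hF3 (hustarN (N + 1) _
      ((XN (N + 1)).sub_mem (hnested N (hustarN_mem N)) (hustarN_mem (N + 1))))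
  have hdiscrete := sq_le_geom_of_perturbed_contraction (e := fun N => η N (ustarN N))
    hC₇.le (half_pos hν) (by positivity) hq0.le hq1.le hE0 hE hdec hperturb
  have hqΔ' : (q + C₇ / (ν / 2) * (L * C₂ ^ 2 / 2)) / (1 + C₇ / (ν / 2) * (L * C₂ ^ 2 / 2)) =
      qΔ := by
    rw [hqΔ, hγ]; field_simp; ring
  have hqΔ0 : 0 ≤ qΔ := by rw [hqΔ, hγ]; positivity
  rw [hqΔ'] at hdiscrete
  exact ⟨_, by positivity, sq_le_geom_of_abs_sub_le hδ (by positivity) hqΔ0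
    (fun N => hηnonneg N _ (humem N)) hequiv hdiscrete⟩

/-- Linear decay of the error estimators: under (F1)–(F3), (A1)–(A2), the stopping
criterion with `λ ∈ (0, 1/C₅)`, and the perturbed contraction property, there is
`C₈ > 0` with `η_{N+K}(u_{N+K})² ≤ C₈ q_Δ^K η_N(u_N)²` for all `N, K ≥ 0`. -/
theorem stmt_18
    {X : Type*} [NormedAddCommGroup X] [InnerProductSpace ℝ X] [CompleteSpace X]
    (F : X → X →L[ℝ] ℝ) (L ν : ℝ) (hL : 0 < L) (hν : 0 < ν)
    (hF1 : ∀ u v w : X, |F u w - F v w| ≤ L * ‖u - v‖ * ‖w‖)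
    (hF2 : ∀ u v : X, ν * ‖u - v‖ ^ 2 ≤ F u (u - v) - F v (u - v))
    (ustar : X) (hustar : ∀ v : X, F ustar v = 0)
    (a : X → X →ₗ[ℝ] X →ₗ[ℝ] ℝ) (α β : ℝ) (hα : 0 < α) (hβ : 0 < β)
    (hcoer : ∀ u v : X, α * ‖v‖ ^ 2 ≤ a u v v)
    (hbdd : ∀ u v w : X, a u v w ≤ β * ‖v‖ * ‖w‖)
    (H : X → ℝ)
    (hF3 : ∀ v w : X, ∀ t : ℝ, HasDerivAt (fun s : ℝ => H (v + s • w)) (F (v + t • w) w) t)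
    (XN : ℕ → Submodule ℝ X) (hclosed : ∀ N : ℕ, IsClosed (XN N : Set X))
    (hnested : ∀ N : ℕ, XN N ≤ XN (N + 1))
    (ustarN : ℕ → X) (hustarN_mem : ∀ N : ℕ, ustarN N ∈ XN N)
    (hustarN : ∀ N : ℕ, ∀ v ∈ XN N, F (ustarN N) v = 0)
    (η : ℕ → X → ℝ) (C₁ C₂ : ℝ) (hC₁ : 1 ≤ C₁) (hC₂ : 1 ≤ C₂)
    (hηnonneg : ∀ N : ℕ, ∀ v ∈ XN N, 0 ≤ η N v)
    (hA1 : ∀ N : ℕ, ∀ v ∈ XN N, ∀ w ∈ XN N, |η N v - η N w| ≤ C₁ * ‖v - w‖)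
    (hA2 : ∀ N : ℕ, ‖ustar - ustarN N‖ ≤ C₂ * η N (ustarN N))
    (C₃ C₅ : ℝ) (hC₃ : C₃ = 1 + β / ν) (hC₅ : C₅ = C₃ * C₁)
    (lam : ℝ) (hlam : 0 < lam) (hlam' : lam < 1 / C₅)
    (q C₇ : ℝ) (hq0 : 0 < q) (hq1 : q < 1) (hC₇ : 0 < C₇)
    (hperturb : ∀ N : ℕ,
      η (N + 1) (ustarN (N + 1)) ^ 2 ≤
        q * η N (ustarN N) ^ 2 + C₇ * ‖ustarN (N + 1) - ustarN N‖ ^ 2)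
    (w u : ℕ → X) (hwmem : ∀ N : ℕ, w N ∈ XN N) (humem : ∀ N : ℕ, u N ∈ XN N)
    (hstep : ∀ N : ℕ, ∀ v ∈ XN N, a (w N) (u N) v = a (w N) (w N) v - F (w N) v)
    (hstop : ∀ N : ℕ, ‖u N - w N‖ ≤ lam * η N (u N))
    (γ qΔ : ℝ) (hγ : γ = ν / (2 * C₇))
    (hqΔ : qΔ = (L * C₂ ^ 2 + 2 * γ * q) / (L * C₂ ^ 2 + 2 * γ)) :
    ∃ C₈ : ℝ, 0 < C₈ ∧
      ∀ N K : ℕ, η (N + K) (u (N + K)) ^ 2 ≤ C₈ * qΔ ^ K * η N (u N) ^ 2 :=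
  stmt_18_general F L ν hL hν hF1 hF2 ustar hustar a β hβ hbdd H hF3 XN hnested ustarN hustarN_mem
    hustarN η C₁ C₂ hC₁ hηnonneg hA1 hA2 C₃ C₅ hC₃ hC₅ lam hlam hlam' q C₇ hq0 hq1 hC₇ hperturb w u
    hwmem humem hstep hstop γ qΔ hγ hqΔ
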